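/- arXiv:2005.01358 — 2 statements merged into one kernel-verified Lean document; each statement's English description precedes it below -/
import Mathlib

section
/- Let Ψ be the Barles–Soner function. Then Ψ(A)/A tends to 1 as A → +∞, and Ψ(A) tends to −1 as A → −∞. -/
/-!
On `(-∞, 0)` the denominator `2√(AΨ) - A` is positive. Hence `Ψ` cannot drop below `-1`, since
it would then keep decreasing up to `A = 0`; and while `Ψ ≥ m > -1` the ODE gives
`Ψ' ≥ (m + 1) / (3|A|)`, whose logarithmic growth in `|A|` eventually pushes `Ψ` below `m`.

On `(0, ∞)` the denominator has constant sign by the intermediate value theorem, and it is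
positive, since otherwise `Ψ` would decrease from `Ψ 0 = 0`. For `u = Ψ A / A` and `s = √u > 1/2`
the ODE reads `u' = (1 + 2 A s² (1 - s)) / (A² (2 s - 1))`. Below a level `m < 1` this is at least
`(1 - √m) / A`, above a level `m > 1` (and for large `A`) at most `-(√m - 1) / (2 A)`. A lower bound
`c / A` on the derivative below a level makes a function grow like `c log A` until it reaches the
level, after which it cannot cross back; so `u → 1`.
-/

open Real Filter Set

theorem tendsto_atTop_of_div_le_deriv {f f' : ℝ → ℝ} {a c : ℝ} (ha : 0 ≤ a) (hc : 0 < c)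
    (hf : ∀ x, a < x → HasDerivAt f (f' x) x) (hf' : ∀ x, a < x → c / x ≤ f' x) :
    Tendsto f atTop atTop := by
  set b := a + 1
  have hb : 0 < b := by positivity
  have hmono : MonotoneOn (fun x => f x - c * log x) (Ici b) := by
    refine monotoneOn_of_hasDerivWithinAt_nonneg (f' := fun x => f' x - c / x) (convex_Ici b)
      (fun x hx => ?_) (fun x hx => ?_) (fun x hx => ?_)
    · have hx0 : 0 < x := hb.trans_le hx
      exact ((hf x (by linarith [mem_Ici.1 hx])).continuousAt.sub
        (continuousAt_const.mul (continuousAt_log hx0.ne'))).continuousWithinAt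
    · rw [interior_Ici] at hx
      have hx0 : x ≠ 0 := (hb.trans hx).ne'
      simpa only [div_eq_mul_inv] using
        ((hf x (by linarith [mem_Ioi.1 hx])).fun_sub
          ((hasDerivAt_log hx0).const_mul c)).hasDerivWithinAt
    · rw [interior_Ici] at hx
      exact sub_nonneg.2 (hf' x (by linarith [mem_Ioi.1 hx]))
  have hlog : Tendsto (fun x => f b - c * log b + c * log x) atTop atTop :=
    tendsto_atTop_add_const_left _ _ (tendsto_log_atTop.const_mul_atTop hc)
  refine tendsto_atTop_mono' atTop ?_ hlog
  filter_upwards [eventually_ge_atTop b] with x hx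
  linarith [hmono self_mem_Ici hx hx]

theorem eventually_le_of_div_le_deriv_of_le {f f' : ℝ → ℝ} {a c m : ℝ} (ha : 0 ≤ a)
    (hc : 0 < c) (hf : ∀ x, a < x → HasDerivAt f (f' x) x)
    (hf' : ∀ x, a < x → f x ≤ m → c / x ≤ f' x) :
    ∀ᶠ x in atTop, m ≤ f x := by
  obtain ⟨x₀, hax₀, hx₀⟩ : ∃ x₀, a < x₀ ∧ m ≤ f x₀ := by
    by_contra! hlt
    have htop := tendsto_atTop_of_div_le_deriv ha hc hf fun x hx => hf' x hx (hlt x hx).le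
    obtain ⟨x, hx, hax⟩ := ((htop.eventually_ge_atTop m).and (eventually_gt_atTop a)).exists
    exact (hlt x hax).not_ge hx
  filter_upwards [eventually_ge_atTop x₀] with x hx
  have hderiv : ∀ y ∈ Icc x₀ x, HasDerivAt f (f' y) y := fun y hy => hf y (hax₀.trans_le hy.1)
  refine image_le_of_deriv_right_lt_deriv_boundary' (f' := 0) continuousOn_const
    (fun y _ => hasDerivWithinAt_const _ _ _) hx₀
    (fun y hy => (hderiv y hy).continuousAt.continuousWithinAt)
    (fun y hy => (hderiv y (Ico_subset_Icc_self hy)).hasDerivWithinAt) (fun y hy hfy => ?_)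
    (right_mem_Icc.2 hx)
  have hy₀ : a < y := hax₀.trans_le hy.1
  exact (div_pos hc (ha.trans_lt hy₀)).trans_le (hf' y hy₀ hfy.ge)

theorem Real.sqrt_mul_eq_mul_sqrt_div {a : ℝ} (ha : 0 < a) (b : ℝ) :
    √(a * b) = a * √(b / a) := by
  rw [show a * b = a ^ 2 * (b / a) by field_simp, sqrt_mul (sq_nonneg a), sqrt_sq ha.le]

namespace BarlesSoner

variable {Ψ : ℝ → ℝ}

theorem neg_one_le_of_neg (hcont : Continuous Ψ) (h0 : Ψ 0 = 0)
    (hdiff : ∀ A : ℝ, A ≠ 0 → DifferentiableAt ℝ Ψ A)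
    (hode : ∀ A : ℝ, A ≠ 0 → deriv Ψ A = (Ψ A + 1) / (2 * √(A * Ψ A) - A))
    {A : ℝ} (hA : A < 0) : -1 ≤ Ψ A := by
  by_contra! hlt
  have hle : Ψ 0 ≤ Ψ A := by
    refine image_le_of_deriv_right_lt_deriv_boundary' (B := fun _ => Ψ A) (B' := 0)
      hcont.continuousOn (fun x hx => (hdiff x hx.2.ne).hasDerivAt.hasDerivWithinAt) le_rfl
      continuousOn_const (fun _ _ => hasDerivWithinAt_const _ _ _) (fun x hx hΨx => ?_)
      (right_mem_Icc.2 hA.le)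
    rw [hode x hx.2.ne, hΨx]
    exact div_neg_of_neg_of_pos (by linarith) (by linarith [sqrt_nonneg (x * Ψ A), hx.2])
  linarith

theorem eventually_comp_neg_le (hdiff : ∀ A : ℝ, A ≠ 0 → DifferentiableAt ℝ Ψ A)
    (hode : ∀ A : ℝ, A ≠ 0 → deriv Ψ A = (Ψ A + 1) / (2 * √(A * Ψ A) - A))
    {m : ℝ} (hm : -1 < m) : ∀ᶠ t in atTop, Ψ (-t) ≤ m := by
  have hderiv : ∀ t, 1 < t → HasDerivAt (fun t => -Ψ (-t)) (deriv Ψ (-t)) t := fun t ht => by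
    have h := ((hdiff (-t) (by linarith)).hasDerivAt.comp t (hasDerivAt_neg t)).neg
    rwa [mul_neg_one, neg_neg] at h
  have hgrowth : ∀ t, 1 < t → -Ψ (-t) ≤ -m → (m + 1) / 3 / t ≤ deriv Ψ (-t) := by
    intro t ht hle
    have hsqrt : √(-t * Ψ (-t)) ≤ t := (sqrt_le_left (by linarith)).2 (by nlinarith)
    rw [hode (-t) (by linarith), div_div]
    exact div_le_div₀ (by linarith) (by linarith) (by linarith [sqrt_nonneg (-t * Ψ (-t))])
      (by linarith)
  filter_upwards [eventually_le_of_div_le_deriv_of_le zero_le_one (by linarith) hderiv hgrowth]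
    with t ht
  linarith

theorem tendsto_atBot_nhds_neg_one (hcont : Continuous Ψ) (h0 : Ψ 0 = 0)
    (hdiff : ∀ A : ℝ, A ≠ 0 → DifferentiableAt ℝ Ψ A)
    (hode : ∀ A : ℝ, A ≠ 0 → deriv Ψ A = (Ψ A + 1) / (2 * √(A * Ψ A) - A)) :
    Tendsto Ψ atBot (nhds (-1)) := by
  have h : Tendsto (fun t => Ψ (-t)) atTop (nhds (-1)) := by
    refine tendsto_order.2 ⟨fun b hb => ?_, fun b hb => ?_⟩
    · filter_upwards [eventually_gt_atTop 0] with t ht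
      exact hb.trans_le (neg_one_le_of_neg hcont h0 hdiff hode (neg_lt_zero.2 ht))
    · obtain ⟨m, hm, hmb⟩ := exists_between hb
      filter_upwards [eventually_comp_neg_le hdiff hode hm] with t ht
      exact ht.trans_lt hmb
  simpa [Function.comp_def] using h.comp tendsto_neg_atBot_atTop

theorem two_sqrt_mul_sub_pos (hcont : Continuous Ψ) (h0 : Ψ 0 = 0)
    (hprod : ∀ A : ℝ, A ≠ 0 → 0 ≤ A * Ψ A)
    (hne : ∀ A : ℝ, A ≠ 0 → 2 * √(A * Ψ A) ≠ A)
    (hode : ∀ A : ℝ, A ≠ 0 → deriv Ψ A = (Ψ A + 1) / (2 * √(A * Ψ A) - A))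
    {A : ℝ} (hA : 0 < A) : 0 < 2 * √(A * Ψ A) - A := by
  have hΨ : ∀ x, 0 < x → 0 ≤ Ψ x := fun x hx => nonneg_of_mul_nonneg_right (hprod x hx.ne') hx
  by_contra! hAneg
  have hneg : ∀ x, 0 < x → 2 * √(x * Ψ x) - x < 0 := by
    intro x hx
    by_contra! hxpos
    obtain ⟨y, hy, hy0⟩ := isPreconnected_Ioi.intermediate_value (mem_Ioi.2 hA) (mem_Ioi.2 hx)
      (by fun_prop : Continuous fun x => 2 * √(x * Ψ x) - x).continuousOn ⟨hAneg, hxpos⟩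
    exact hne y (ne_of_gt hy) (sub_eq_zero.1 hy0)
  have hanti : StrictAntiOn Ψ (Ici 0) := strictAntiOn_of_deriv_neg (convex_Ici 0)
    hcont.continuousOn fun x hx => by
      rw [interior_Ici] at hx
      rw [hode x (ne_of_gt hx)]
      exact div_neg_of_pos_of_neg (by linarith [hΨ x hx]) (hneg x hx)
  linarith [hanti self_mem_Ici (mem_Ici.2 zero_le_one) one_pos, hΨ 1 one_pos]

-- the derivative of `A ↦ Ψ A / A` at `A`, in terms of `s = √(Ψ A / A)`
noncomputable def ratioDeriv (A s : ℝ) : ℝ :=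
  (1 + 2 * A * s ^ 2 * (1 - s)) / (A ^ 2 * (2 * s - 1))

theorem one_sub_div_le_ratioDeriv {A s ρ : ℝ} (hA : 0 < A) (hs : 1 / 2 < s) (hsρ : s ≤ ρ)
    (hρ : ρ ≤ 1) : (1 - ρ) / A ≤ ratioDeriv A s := by
  have hkey : (2 * s - 1) * (1 - ρ) ≤ 2 * s ^ 2 * (1 - s) := by
    nlinarith [mul_le_mul_of_nonneg_left (sub_le_sub_left hsρ 1) (by linarith : 0 ≤ 2 * s - 1),
      mul_nonneg (sq_nonneg (s - 1)) (by linarith : 0 ≤ 1 - s)]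
  rw [ratioDeriv, div_le_div_iff₀ hA (mul_pos (pow_pos hA 2) (by linarith))]
  nlinarith [mul_le_mul_of_nonneg_left hkey (sq_nonneg A)]

theorem div_le_neg_ratioDeriv {A s σ : ℝ} (hA : 0 < A) (hσ : 1 < σ) (hσs : σ ≤ s)
    (hAσ : 1 ≤ A * σ ^ 2 * (σ - 1)) : (σ - 1) / 2 / A ≤ -ratioDeriv A s := by
  have hs : A * σ ^ 2 * (σ - 1) ≤ A * s ^ 2 * (s - 1) := by gcongr
  have hkey : (2 * s - 1) * (σ - 1) ≤ 2 * s ^ 2 * (s - 1) := by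
    nlinarith [mul_le_mul_of_nonneg_left (sub_le_sub_right hσs 1) (by linarith : 0 ≤ 2 * s - 1),
      mul_nonneg (sq_nonneg (s - 1)) (by linarith : 0 ≤ s - 1)]
  rw [ratioDeriv, ← neg_div, div_le_div_iff₀ hA (mul_pos (pow_pos hA 2) (by linarith))]
  nlinarith [mul_le_mul_of_nonneg_left hkey (sq_nonneg A)]

theorem tendsto_of_hasDerivAt_ratioDeriv {u : ℝ → ℝ} (hs : ∀ A, 0 < A → 1 / 2 < √(u A))
    (hu : ∀ A, 0 < A → HasDerivAt u (ratioDeriv A √(u A)) A) :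
    Tendsto u atTop (nhds 1) := by
  refine tendsto_order.2 ⟨fun b hb => ?_, fun b hb => ?_⟩
  · obtain ⟨m, hbm, hm⟩ := exists_between hb
    have hρ : √m < 1 := (sqrt_lt' one_pos).2 (by linarith)
    filter_upwards [eventually_le_of_div_le_deriv_of_le le_rfl (sub_pos.2 hρ) hu
      fun A hA hle => one_sub_div_le_ratioDeriv hA (hs A hA) (sqrt_le_sqrt hle) hρ.le] with A hA
    exact hbm.trans_le hA
  · obtain ⟨m, hm, hmb⟩ := exists_between hb
    have hσ : 1 < √m := (lt_sqrt zero_le_one).2 (by linarith)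
    have hσ3 : 0 < √m ^ 2 * (√m - 1) := by have := sub_pos.2 hσ; positivity
    have hgrowth (A : ℝ) (hA : 1 / (√m ^ 2 * (√m - 1)) < A) (hle : -u A ≤ -m) :
        (√m - 1) / 2 / A ≤ -ratioDeriv A √(u A) := by
      have hA0 : 0 < A := lt_of_le_of_lt (by positivity) hA
      refine div_le_neg_ratioDeriv hA0 hσ (sqrt_le_sqrt (by linarith)) ?_
      rw [div_lt_iff₀ hσ3] at hA
      linarith
    filter_upwards [eventually_le_of_div_le_deriv_of_le (by positivity) (by linarith)
      (fun A hA => (hu A (lt_of_le_of_lt (by positivity) hA)).neg) hgrowth] with A hA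
    linarith [show -m ≤ -u A from hA]

theorem hasDerivAt_div_self (hdiff : ∀ A : ℝ, A ≠ 0 → DifferentiableAt ℝ Ψ A)
    (hprod : ∀ A : ℝ, A ≠ 0 → 0 ≤ A * Ψ A)
    (hode : ∀ A : ℝ, A ≠ 0 → deriv Ψ A = (Ψ A + 1) / (2 * √(A * Ψ A) - A))
    {A : ℝ} (hA : 0 < A) (hD : 0 < 2 * √(A * Ψ A) - A) :
    HasDerivAt (fun x => Ψ x / x) (ratioDeriv A √(Ψ A / A)) A := by
  refine ((hdiff A hA.ne').hasDerivAt.fun_div (hasDerivAt_id' A) hA.ne').congr_deriv ?_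
  rw [sqrt_mul_eq_mul_sqrt_div hA] at hD
  have hsq : √(Ψ A / A) ^ 2 = Ψ A / A :=
    sq_sqrt (div_nonneg (nonneg_of_mul_nonneg_right (hprod A hA.ne') hA) hA.le)
  have hΨ : Ψ A = A * √(Ψ A / A) ^ 2 := by rw [hsq]; field_simp
  rw [hode A hA.ne', sqrt_mul_eq_mul_sqrt_div hA, ratioDeriv]
  generalize √(Ψ A / A) = s at hD hΨ ⊢
  have hs : s * 2 - 1 ≠ 0 := fun h => by nlinarith
  rw [hΨ, show 2 * (A * s) - A = A * (2 * s - 1) by ring]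
  field_simp
  ring

theorem tendsto_div_self_atTop_nhds_one (hcont : Continuous Ψ) (h0 : Ψ 0 = 0)
    (hdiff : ∀ A : ℝ, A ≠ 0 → DifferentiableAt ℝ Ψ A)
    (hprod : ∀ A : ℝ, A ≠ 0 → 0 ≤ A * Ψ A)
    (hne : ∀ A : ℝ, A ≠ 0 → 2 * √(A * Ψ A) ≠ A)
    (hode : ∀ A : ℝ, A ≠ 0 → deriv Ψ A = (Ψ A + 1) / (2 * √(A * Ψ A) - A)) :
    Tendsto (fun A => Ψ A / A) atTop (nhds 1) := by
  have hD (A : ℝ) (hA : 0 < A) := two_sqrt_mul_sub_pos hcont h0 hprod hne hode hA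
  refine tendsto_of_hasDerivAt_ratioDeriv (fun A hA => ?_)
    (fun A hA => hasDerivAt_div_self hdiff hprod hode hA (hD A hA))
  have := hD A hA
  rw [sqrt_mul_eq_mul_sqrt_div hA] at this
  nlinarith

end BarlesSoner

/-- For the Barles–Soner function Ψ, Ψ(A)/A → 1 as A → +∞ and
Ψ(A) → −1 as A → −∞. -/
theorem stmt_0 (Ψ : ℝ → ℝ)
    (hcont : Continuous Ψ)
    (h0 : Ψ 0 = 0)
    (hdiff : ∀ A : ℝ, A ≠ 0 → DifferentiableAt ℝ Ψ A)
    (hprod : ∀ A : ℝ, A ≠ 0 → 0 ≤ A * Ψ A)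
    (hne : ∀ A : ℝ, A ≠ 0 → 2 * Real.sqrt (A * Ψ A) ≠ A)
    (hode : ∀ A : ℝ, A ≠ 0 →
      deriv Ψ A = (Ψ A + 1) / (2 * Real.sqrt (A * Ψ A) - A)) :
    Tendsto (fun A => Ψ A / A) atTop (nhds 1) ∧
    Tendsto Ψ atBot (nhds (-1)) :=
  ⟨BarlesSoner.tendsto_div_self_atTop_nhds_one hcont h0 hdiff hprod hne hode,
    BarlesSoner.tendsto_atBot_nhds_neg_one hcont h0 hdiff hode⟩
end

section
/- Let Ψ be the Barles–Soner function. Then Ψ'(A) ≥ 0 for every A ≠ 0; i.e. Ψ is nondecreasing on ℝ. -/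
open Real Filter

private lemma bs_neg_side (Ψ : ℝ → ℝ) (hcont : Continuous Ψ) (h0 : Ψ 0 = 0)
    (hode : ∀ A : ℝ, A ≠ 0 →
      deriv Ψ A = (Ψ A + 1) / (2 * Real.sqrt (A * Ψ A) - A)) :
    ∀ A : ℝ, A < 0 → -1 ≤ Ψ A := by
  intro A₀ hA₀
  by_contra h
  push_neg at h
  -- set of points in [A₀,0] where Ψ = -1
  set S : Set ℝ := Set.Icc A₀ 0 ∩ Ψ ⁻¹' {-1} with hS
  have hSclosed : IsClosed S := isClosed_Icc.inter (isClosed_singleton.preimage hcont)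
  have hSne : S.Nonempty := by
    have := intermediate_value_Icc (le_of_lt hA₀) hcont.continuousOn
    have hmem : (-1 : ℝ) ∈ Set.Icc (Ψ A₀) (Ψ 0) := by
      constructor <;> [linarith; linarith [h0]]
    obtain ⟨t, ht, hΨt⟩ := this hmem
    exact ⟨t, ht, hΨt⟩
  have hSbdd : BddBelow S := ⟨A₀, fun x hx => hx.1.1⟩
  set t := sInf S with htdef
  have htS : t ∈ S := hSclosed.csInf_mem hSne hSbdd
  have hΨt : Ψ t = -1 := htS.2
  have ht0 : t ≤ 0 := htS.1.2
  have hA₀t : A₀ < t := by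
    rcases lt_or_eq_of_le htS.1.1 with h' | h'
    · exact h'
    · exfalso; rw [← h'] at hΨt; linarith
  -- Ψ < -1 on [A₀, t)
  have hlt : ∀ a ∈ Set.Ico A₀ t, Ψ a < -1 := by
    intro a ha
    by_contra hge
    push_neg at hge
    rcases eq_or_lt_of_le hge with heq | hgt
    · have : a ∈ S := ⟨⟨ha.1, le_trans (le_of_lt ha.2) ht0⟩, heq.symm⟩
      exact absurd (csInf_le hSbdd this) (not_le.mpr ha.2)
    · have := intermediate_value_Icc ha.1 hcont.continuousOn
      have hmem : (-1 : ℝ) ∈ Set.Icc (Ψ A₀) (Ψ a) := ⟨le_of_lt h, le_of_lt hgt⟩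
      obtain ⟨s, hs, hΨs⟩ := this hmem
      have : s ∈ S := ⟨⟨hs.1, le_trans hs.2 (le_trans (le_of_lt ha.2) ht0)⟩, hΨs⟩
      have := csInf_le hSbdd this
      linarith [hs.2, ha.2]
  -- deriv Ψ < 0 on (A₀, t)
  have hderiv : ∀ x ∈ interior (Set.Icc A₀ t), deriv Ψ x < 0 := by
    intro x hx
    rw [interior_Icc] at hx
    have hx0 : x < 0 := lt_of_lt_of_le hx.2 ht0
    rw [hode x (ne_of_lt hx0)]
    have hnum : Ψ x + 1 < 0 := by
      have := hlt x ⟨le_of_lt hx.1, hx.2⟩; linarith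
    have hden : 0 < 2 * Real.sqrt (x * Ψ x) - x := by
      have := Real.sqrt_nonneg (x * Ψ x); linarith
    exact div_neg_of_neg_of_pos hnum hden
  have hanti : StrictAntiOn Ψ (Set.Icc A₀ t) :=
    strictAntiOn_of_deriv_neg (convex_Icc A₀ t) hcont.continuousOn hderiv
  have := hanti (Set.left_mem_Icc.mpr (le_of_lt hA₀t))
    (Set.right_mem_Icc.mpr (le_of_lt hA₀t)) hA₀t
  linarith

private lemma bs_pos_side (Ψ : ℝ → ℝ) (hcont : Continuous Ψ) (h0 : Ψ 0 = 0)
    (hprod : ∀ A : ℝ, A ≠ 0 → 0 ≤ A * Ψ A)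
    (hne : ∀ A : ℝ, A ≠ 0 → 2 * Real.sqrt (A * Ψ A) ≠ A)
    (hode : ∀ A : ℝ, A ≠ 0 →
      deriv Ψ A = (Ψ A + 1) / (2 * Real.sqrt (A * Ψ A) - A)) :
    ∀ A : ℝ, 0 < A → 0 < 2 * Real.sqrt (A * Ψ A) - A := by
  have hΨnonneg : ∀ A : ℝ, 0 < A → 0 ≤ Ψ A := by
    intro A hA
    have := hprod A (ne_of_gt hA)
    nlinarith
  intro A₀ hA₀
  by_contra hcon
  push_neg at hcon
  have hD : 2 * Real.sqrt (A₀ * Ψ A₀) - A₀ < 0 :=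
    lt_of_le_of_ne hcon (fun hh => hne A₀ (ne_of_gt hA₀) (by linarith))
  set D : ℝ → ℝ := fun x => 2 * Real.sqrt (x * Ψ x) - x with hDdef
  have hDcont : Continuous D := by
    apply Continuous.sub _ continuous_id
    exact continuous_const.mul (Real.continuous_sqrt.comp (continuous_id.mul hcont))
  -- D < 0 on all of (0, ∞)
  have hDneg : ∀ B : ℝ, 0 < B → D B < 0 := by
    intro B hB
    by_contra hge
    push_neg at hge
    have hBpos : 0 < D B :=
      lt_of_le_of_ne hge (fun hh => hne B (ne_of_gt hB) (by simp [hDdef] at hh; linarith))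
    have hsub := intermediate_value_uIcc (a := A₀) (b := B) (f := D) hDcont.continuousOn
    have hmem : (0 : ℝ) ∈ Set.uIcc (D A₀) (D B) := by
      rw [Set.mem_uIcc]; left; exact ⟨le_of_lt hD, le_of_lt hBpos⟩
    obtain ⟨c, hc, hDc⟩ := hsub hmem
    have hcpos : 0 < c := lt_of_lt_of_le (lt_min hA₀ hB) (Set.mem_uIcc.mp hc |>.elim
      (fun h => le_trans (min_le_left _ _) h.1) (fun h => le_trans (min_le_right _ _) h.1))
    exact hne c (ne_of_gt hcpos) (by simp [hDdef] at hDc; linarith)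
  -- then Ψ strictly decreasing on (0, ∞)
  have hderiv : ∀ x ∈ interior (Set.Ioi (0:ℝ)), deriv Ψ x < 0 := by
    intro x hx
    rw [interior_Ioi] at hx
    rw [hode x (ne_of_gt hx)]
    have hnum : 0 < Ψ x + 1 := by linarith [hΨnonneg x hx]
    exact div_neg_of_pos_of_neg hnum (hDneg x hx)
  have hanti : StrictAntiOn Ψ (Set.Ioi 0) :=
    strictAntiOn_of_deriv_neg (convex_Ioi 0) hcont.continuousOn hderiv
  have h12 : Ψ 1 < Ψ (1/2) := hanti (Set.mem_Ioi.mpr (by norm_num)) (Set.mem_Ioi.mpr (by norm_num)) (by norm_num)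
  have hhalf : Ψ (1/2) ≤ 0 := by
    have htend : Tendsto Ψ (nhdsWithin 0 (Set.Ioi 0)) (nhds 0) := by
      have := tendsto_nhdsWithin_of_tendsto_nhds (s := Set.Ioi (0:ℝ)) (hcont.tendsto 0)
      rwa [h0] at this
    refine ge_of_tendsto htend ?_
    filter_upwards [Ioo_mem_nhdsGT_of_mem (show (0:ℝ) ∈ Set.Ico (0:ℝ) (1/2) by norm_num)]
      with x hx
    exact le_of_lt (hanti (Set.mem_Ioi.mpr hx.1) (Set.mem_Ioi.mpr (by norm_num)) hx.2)
  have := hΨnonneg 1 (by norm_num)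
  linarith

/-- For the Barles–Soner function Ψ, Ψ'(A) ≥ 0 for every A ≠ 0;
i.e. Ψ is nondecreasing on ℝ. -/
theorem stmt_2 (Ψ : ℝ → ℝ)
    (hcont : Continuous Ψ)
    (h0 : Ψ 0 = 0)
    (hdiff : ∀ A : ℝ, A ≠ 0 → DifferentiableAt ℝ Ψ A)
    (hprod : ∀ A : ℝ, A ≠ 0 → 0 ≤ A * Ψ A)
    (hne : ∀ A : ℝ, A ≠ 0 → 2 * Real.sqrt (A * Ψ A) ≠ A)
    (hode : ∀ A : ℝ, A ≠ 0 →
      deriv Ψ A = (Ψ A + 1) / (2 * Real.sqrt (A * Ψ A) - A)) :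
    (∀ A : ℝ, A ≠ 0 → 0 ≤ deriv Ψ A) ∧ Monotone Ψ := by
  have hmain : ∀ A : ℝ, A ≠ 0 → 0 ≤ deriv Ψ A := by
    intro A hA
    rw [hode A hA]
    rcases lt_or_gt_of_ne hA with hneg | hpos
    · -- A < 0
      have hΨ : -1 ≤ Ψ A := bs_neg_side Ψ hcont h0 hode A hneg
      have hden : 0 < 2 * Real.sqrt (A * Ψ A) - A := by
        have := Real.sqrt_nonneg (A * Ψ A); linarith
      exact div_nonneg (by linarith) (le_of_lt hden)
    · -- A > 0
      have hden := bs_pos_side Ψ hcont h0 hprod hne hode A hpos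
      have hΨ : 0 ≤ Ψ A := by nlinarith [hprod A hA]
      exact div_nonneg (by linarith) (le_of_lt hden)
  refine ⟨hmain, ?_⟩
  have hmono1 : MonotoneOn Ψ (Set.Iic 0) := by
    apply monotoneOn_of_deriv_nonneg (convex_Iic 0) hcont.continuousOn
    · intro x hx
      rw [interior_Iic] at hx
      exact (hdiff x (ne_of_lt hx)).differentiableWithinAt
    · intro x hx
      rw [interior_Iic] at hx
      exact hmain x (ne_of_lt hx)
  have hmono2 : MonotoneOn Ψ (Set.Ici 0) := by
    apply monotoneOn_of_deriv_nonneg (convex_Ici 0) hcont.continuousOn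
    · intro x hx
      rw [interior_Ici] at hx
      exact (hdiff x (ne_of_gt hx)).differentiableWithinAt
    · intro x hx
      rw [interior_Ici] at hx
      exact hmain x (ne_of_gt hx)
  intro a b hab
  rcases le_total b 0 with hb | hb
  · exact hmono1 (Set.mem_Iic.mpr (le_trans hab hb)) (Set.mem_Iic.mpr hb) hab
  · rcases le_total 0 a with ha | ha
    · exact hmono2 (Set.mem_Ici.mpr ha) (Set.mem_Ici.mpr (le_trans ha hab)) hab
    · calc Ψ a ≤ Ψ 0 := hmono1 (Set.mem_Iic.mpr ha) (Set.mem_Iic.mpr (le_refl 0)) ha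
        _ ≤ Ψ b := hmono2 (Set.mem_Ici.mpr (le_refl 0)) (Set.mem_Ici.mpr hb) hb
end
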